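/- Let $T \ge 2$ be an even natural number and let $a_1,\dots,a_m$ be a finite sequence of even natural numbers with $a_1 = 2$, $a_m = 2$, $|a_{i+1}-a_i| = 2$ for all $i$, and $\max_i a_i \ge T$. Then $\sum_{i=1}^m a_i \ge T^2/2$. -/
import Mathlib

lemma aux_sum_down (n : ℕ) : ∑ i ∈ Finset.range n, 2*(n - i) = n*(n+1) := by
  induction n with
  | zero => simp
  | succ n ih =>
    rw [Finset.sum_range_succ]
    have h : ∑ i ∈ Finset.range n, 2*(n+1-i) = ∑ i ∈ Finset.range n, (2*(n-i)+2) := by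
      apply Finset.sum_congr rfl
      intro i hi
      simp only [Finset.mem_range] at hi
      omega
    rw [h, Finset.sum_add_distrib, ih, Finset.sum_const, Finset.card_range,
      smul_eq_mul, show n+1-n = 1 from by omega]
    ring

lemma aux_sum_up (s : ℕ) : ∑ j ∈ Finset.range s, (2+2*j) = s^2+s := by
  induction s with
  | zero => simp
  | succ s ih =>
    rw [Finset.sum_range_succ, ih]
    ring

set_option maxHeartbeats 1000000 in
/-- Let `T ≥ 2` be an even natural number and `a₁,…,a_m` a finite sequence of
even natural numbers with `a₁ = 2`, `a_m = 2`, `|a_{i+1} - a_i| = 2` for all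
`i`, achieving a maximum `≥ T`.  Then `∑ aᵢ ≥ T²/2`, i.e. `2 ∑ aᵢ ≥ T²`. -/
theorem sum_ge_sq_of_steps (T m : ℕ) (hT : 2 ≤ T) (hTeven : Even T)
    (hm : 1 ≤ m) (a : Fin m → ℕ)
    (heven : ∀ i, Even (a i))
    (hfirst : a ⟨0, by omega⟩ = 2)
    (hlast : a ⟨m - 1, by omega⟩ = 2)
    (hstep : ∀ i : ℕ, (h : i + 1 < m) →
      a ⟨i + 1, h⟩ = a ⟨i, by omega⟩ + 2 ∨ a ⟨i, by omega⟩ = a ⟨i + 1, h⟩ + 2)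
    (hmax : ∃ i, T ≤ a i) :
    T ^ 2 ≤ 2 * ∑ i, a i := by
  obtain ⟨k0, hk0⟩ := hmax
  obtain ⟨s, hs⟩ := hTeven
  set b : ℕ → ℕ := fun i => if h : i < m then a ⟨i, h⟩ else 0 with hb
  have hstep' : ∀ i, i + 1 < m → (b (i+1) ≤ b i + 2 ∧ b i ≤ b (i+1) + 2) := by
    intro i h
    have hi : i < m := by omega
    have e1 : b (i+1) = a ⟨i+1, h⟩ := dif_pos h
    have e2 : b i = a ⟨i, hi⟩ := dif_pos hi
    have h2' : b (i+1) = b i + 2 ∨ b i = b (i+1) + 2 := by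
      rw [e1, e2]; exact hstep i h
    omega
  have key : ∀ d i, i + d < m → b (i+d) ≤ b i + 2*d ∧ b i ≤ b (i+d) + 2*d := by
    intro d
    induction d with
    | zero => intro i h; simp only [Nat.add_zero]; omega
    | succ d ih =>
      intro i h
      have h1 := ih (i+1) (by omega)
      have h2 := hstep' i (by omega)
      have he : i + 1 + d = i + (d+1) := by omega
      rw [he] at h1
      omega
  set k := (k0 : ℕ) with hk
  have hkm : k < m := k0.isLt
  have hbk : T ≤ b k := by
    simp only [hb]
    rw [dif_pos hkm]
    have : (⟨k, hkm⟩ : Fin m) = k0 := by ext; rfl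
    rw [this]; exact hk0
  have hb0 : b 0 = 2 := by
    simp only [hb]; rw [dif_pos (by omega : (0:ℕ) < m)]; exact hfirst
  have hblast : b (m-1) = 2 := by
    simp only [hb]; rw [dif_pos (by omega : m - 1 < m)]; exact hlast
  have hk1 : s ≤ k + 1 := by
    have := key k 0 (by omega)
    simp only [Nat.zero_add] at this
    omega
  have hk2 : k + s ≤ m := by
    have := key (m-1-k) k (by omega)
    have he : k + (m-1-k) = m-1 := by omega
    rw [he] at this
    omega
  -- lower bound function
  set w : ℕ → ℕ := fun i => T - 2*((k - i) + (i - k)) with hw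
  have hwb : ∀ i, i < m → w i ≤ b i := by
    intro i him
    rcases le_total i k with hik | hki
    · have := key (k - i) i (by omega)
      have he : i + (k - i) = k := by omega
      rw [he] at this
      simp only [hw]
      omega
    · have := key (i - k) k (by omega)
      have he : k + (i - k) = i := by omega
      rw [he] at this
      simp only [hw]
      omega
  set base := k + 1 - s with hbase
  have hsum1 : ∑ i ∈ Finset.Ico base (k+s), w i ≤ ∑ i ∈ Finset.range m, b i := by
    calc ∑ i ∈ Finset.Ico base (k+s), w i
        ≤ ∑ i ∈ Finset.Ico base (k+s), b i := by
          apply Finset.sum_le_sum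
          intro i hi
          simp only [Finset.mem_Ico] at hi
          exact hwb i (by omega)
      _ ≤ ∑ i ∈ Finset.range m, b i := by
          apply Finset.sum_le_sum_of_subset
          intro x hx
          simp only [Finset.mem_Ico] at hx
          simp only [Finset.mem_range]
          omega
  have hsum2 : ∑ i ∈ Finset.Ico base (k+s), w i = 2*s^2 := by
    rw [Finset.sum_Ico_eq_sum_range]
    have hcard : k + s - base = s + (s-1) := by omega
    rw [hcard, Finset.sum_range_add]
    have e1 : ∑ j ∈ Finset.range s, w (base + j) = ∑ j ∈ Finset.range s, (2+2*j) := by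
      apply Finset.sum_congr rfl
      intro j hj
      simp only [Finset.mem_range] at hj
      simp only [hw]
      omega
    have e2 : ∑ j ∈ Finset.range (s-1), w (base + (s + j))
        = ∑ j ∈ Finset.range (s-1), 2*((s-1) - j) := by
      apply Finset.sum_congr rfl
      intro j hj
      simp only [Finset.mem_range] at hj
      simp only [hw]
      omega
    rw [e1, e2, aux_sum_up, aux_sum_down]
    have h1 : 1 ≤ s := by omega
    nlinarith [Nat.sub_add_cancel h1]
  have hsum3 : ∑ i : Fin m, a i = ∑ i ∈ Finset.range m, b i := by
    rw [← Fin.sum_univ_eq_sum_range]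
    apply Finset.sum_congr rfl
    intro i _
    simp only [hb]
    rw [dif_pos i.isLt]
  have hfin : 2*s^2 ≤ ∑ i : Fin m, a i := by
    rw [hsum3]; omega
  have hT2 : T^2 = 2*(2*s^2) := by
    subst hs; ring
  rw [hT2]
  exact Nat.mul_le_mul_left 2 hfin
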